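/- arXiv:1511.08768 — 4 statements merged into one kernel-verified Lean document; each statement's English description precedes it below -/
import Mathlib

section
/- Let f : ℝⁿ → ℝ be twice continuously differentiable, let x ∈ ℝⁿ, δ > 0, and suppose that the operator norm of the Hessian of f is bounded by H at every point of the closed ball of radius δ√n around x. Then for every sign vector Δ ∈ {−1,1}ⁿ and every index i, |(f(x + δΔ) − f(x))/(δΔᵢ) − Σⱼ (∂f/∂xⱼ)(x)·ΔⱼΔᵢ| ≤ (H·n·δ)/2. In particular the simultaneous perturbation estimate (f(x + δΔ) − f(x))/(δΔᵢ) equals (∂f/∂xᵢ)(x) + Σ_{j≠i}(∂f/∂xⱼ)(x)·ΔⱼΔᵢ up to an error of at most (H·n·δ)/2. -/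
/-!
Write `v = δΔ`. Along `t ↦ x + t v`, the Taylor remainder `f (x + t v) - f x - t f'(x) v` has
derivative `f'(x + t v) v - f'(x) v`, of norm at most `H ‖v‖² t` by the mean value inequality
for `f'`; comparing with `H ‖v‖² t² / 2` bounds the remainder at `t = 1` by `H ‖v‖² / 2`.
Since `‖δΔ‖ = δ√n`, `f'(x) Δ · Δᵢ = ∑ⱼ ∂ⱼf(x) Δⱼ Δᵢ` and `|Δᵢ| = 1`, dividing by `δΔᵢ` gives the
error bound `H n δ / 2`; the second form splits off the term `j = i`, where `Δᵢ Δᵢ = 1`.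
-/

open Set

theorem norm_sub_sub_fderiv_le_of_norm_fderiv_fderiv_le
    {E F : Type*} [NormedAddCommGroup E] [NormedSpace ℝ E]
    [NormedAddCommGroup F] [NormedSpace ℝ F] {f : E → F} {x v : E} {H : ℝ}
    (hf : ∀ y ∈ segment ℝ x (x + v), DifferentiableAt ℝ f y)
    (hf' : ∀ y ∈ segment ℝ x (x + v), DifferentiableAt ℝ (fderiv ℝ f) y)
    (hH : ∀ y ∈ segment ℝ x (x + v), ‖fderiv ℝ (fderiv ℝ f) y‖ ≤ H) :
    ‖f (x + v) - f x - fderiv ℝ f x v‖ ≤ H * ‖v‖ ^ 2 / 2 := by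
  have hmem : ∀ t ∈ Icc (0 : ℝ) 1, x + t • v ∈ segment ℝ x (x + v) := fun t ht =>
    (segment_eq_image' ℝ x (x + v)).symm ▸ ⟨t, ht, by simp⟩
  have hslope : ∀ t ∈ Icc (0 : ℝ) 1,
      ‖fderiv ℝ f (x + t • v) v - fderiv ℝ f x v‖ ≤ H * ‖v‖ ^ 2 * t := by
    intro t ht
    have hmvt := (convex_segment x (x + v)).norm_image_sub_le_of_norm_fderiv_le hf' hH
      (left_mem_segment ℝ _ _) (hmem t ht)
    calc ‖fderiv ℝ f (x + t • v) v - fderiv ℝ f x v‖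
        ≤ ‖fderiv ℝ f (x + t • v) - fderiv ℝ f x‖ * ‖v‖ :=
          (fderiv ℝ f (x + t • v) - fderiv ℝ f x).le_opNorm v
      _ ≤ H * ‖t • v‖ * ‖v‖ := by gcongr; simpa using hmvt
      _ = H * ‖v‖ ^ 2 * t := by rw [norm_smul, Real.norm_of_nonneg ht.1]; ring
  have hderiv : ∀ t ∈ Icc (0 : ℝ) 1,
      HasDerivAt (fun s : ℝ => f (x + s • v) - f x - s • fderiv ℝ f x v)
        (fderiv ℝ f (x + t • v) v - fderiv ℝ f x v) t := by
    intro t ht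
    have hline : HasDerivAt (fun s : ℝ => x + s • v) v t := by
      simpa using ((hasDerivAt_id t).smul_const v).const_add x
    exact (((hf _ (hmem t ht)).hasFDerivAt.comp_hasDerivAt t hline).sub_const (f x)).sub
      (by simpa using (hasDerivAt_id t).smul_const (fderiv ℝ f x v))
  have := image_norm_le_of_norm_deriv_right_le_deriv_boundary (a := 0) (b := 1)
    (B := fun t => H * ‖v‖ ^ 2 * t ^ 2 / 2) (B' := fun t => H * ‖v‖ ^ 2 * t)
    (fun t ht => (hderiv t ht).continuousAt.continuousWithinAt)
    (fun t ht => (hderiv t (Ico_subset_Icc_self ht)).hasDerivWithinAt) (by simp)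
    (fun t => (((hasDerivAt_pow 2 t).const_mul (H * ‖v‖ ^ 2)).div_const 2).congr_deriv
      (by push_cast; ring))
    (fun t ht => hslope t (Ico_subset_Icc_self ht)) (right_mem_Icc.2 zero_le_one)
  simpa using this

theorem norm_eq_sqrt_card_of_sq_eq_one {ι : Type*} [Fintype ι] {Δ : EuclideanSpace ℝ ι}
    (hΔ : ∀ i, Δ i ^ 2 = 1) : ‖Δ‖ = √(Fintype.card ι) := by
  simp [EuclideanSpace.norm_eq, hΔ]

theorem fderiv_apply_eq_sum_gradient_mul {ι : Type*} [Fintype ι]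
    (f : EuclideanSpace ℝ ι → ℝ) (x v : EuclideanSpace ℝ ι) :
    fderiv ℝ f x v = ∑ j, gradient f x j * v j := by
  rw [← inner_gradient_left, PiLp.inner_apply]
  simp [mul_comm]

theorem abs_div_mul_sub_mul_of_sq_eq_one {a b δ s : ℝ} (hδ : 0 < δ) (hs : s ^ 2 = 1) :
    |a / (δ * s) - b * s| = |a - δ * b| / δ := by
  rcases sq_eq_one_iff.1 hs with rfl | rfl
  · rw [mul_one, mul_one, ← abs_of_pos hδ, ← abs_div, abs_of_pos hδ]
    congr 1; field_simp
  · rw [← abs_of_pos hδ, ← abs_div, abs_of_pos hδ, ← abs_neg]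
    congr 1; field_simp; ring

/-- Deterministic error bound for the simultaneous perturbation
estimate: if the Hessian of `f` has operator norm at most `H` on the closed ball
of radius `δ√n` around `x`, then for any sign vector `Δ ∈ {-1,1}ⁿ` and index `i`,
the SP estimate `(f(x + δΔ) - f(x))/(δΔᵢ)` equals `∑ⱼ ∂ⱼf(x)·ΔⱼΔᵢ`, i.e.
`∂ᵢf(x) + ∑_{j≠i} ∂ⱼf(x)·ΔⱼΔᵢ`, up to an error of at most `Hnδ/2`. -/
theorem stmt_1 (n : ℕ) (f : EuclideanSpace ℝ (Fin n) → ℝ) (hf : ContDiff ℝ 2 f)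
    (x : EuclideanSpace ℝ (Fin n)) (δ H : ℝ) (hδ : 0 < δ)
    (hH : ∀ y ∈ Metric.closedBall x (δ * Real.sqrt n),
      ‖fderiv ℝ (fderiv ℝ f) y‖ ≤ H)
    (Δ : EuclideanSpace ℝ (Fin n)) (hΔ : ∀ i, Δ i = 1 ∨ Δ i = -1) (i : Fin n) :
    |(f (x + δ • Δ) - f x) / (δ * Δ i) -
        ∑ j, gradient f x j * (Δ j * Δ i)| ≤ H * n * δ / 2 ∧
    |(f (x + δ • Δ) - f x) / (δ * Δ i) -
        (gradient f x i +
          ∑ j ∈ Finset.univ.erase i, gradient f x j * (Δ j * Δ i))| ≤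
      H * n * δ / 2 := by
  have hΔsq : ∀ j, Δ j ^ 2 = 1 := fun j => sq_eq_one_iff.2 (hΔ j)
  have hstep : ‖δ • Δ‖ = δ * √n := by
    rw [norm_smul, norm_eq_sqrt_card_of_sq_eq_one hΔsq, Real.norm_of_nonneg hδ.le,
      Fintype.card_fin]
  have hseg : segment ℝ x (x + δ • Δ) ⊆ Metric.closedBall x (δ * √n) :=
    (convex_closedBall _ _).segment_subset (Metric.mem_closedBall_self (by positivity))
      (by simp [hstep])
  have hf' : Differentiable ℝ (fderiv ℝ f) :=
    (hf.fderiv_right le_rfl).differentiable one_ne_zero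
  have htaylor := norm_sub_sub_fderiv_le_of_norm_fderiv_fderiv_le
    (fun y _ => hf.differentiable (by norm_num) y) (fun y _ => hf' y)
    (fun y hy => hH y (hseg hy))
  rw [hstep, Real.norm_eq_abs, map_smul, smul_eq_mul] at htaylor
  have hsum : ∑ j, gradient f x j * (Δ j * Δ i) = fderiv ℝ f x Δ * Δ i := by
    simp only [fderiv_apply_eq_sum_gradient_mul, Finset.sum_mul, mul_assoc]
  have hsplit : gradient f x i + ∑ j ∈ Finset.univ.erase i, gradient f x j * (Δ j * Δ i) =
      ∑ j, gradient f x j * (Δ j * Δ i) := by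
    rw [← Finset.add_sum_erase _ _ (Finset.mem_univ i), ← sq, hΔsq, mul_one]
  have hfull : |(f (x + δ • Δ) - f x) / (δ * Δ i) - ∑ j, gradient f x j * (Δ j * Δ i)| ≤
      H * n * δ / 2 := by
    rw [hsum, abs_div_mul_sub_mul_of_sq_eq_one hδ (hΔsq i), div_le_iff₀ hδ]
    calc _ ≤ H * (δ * √n) ^ 2 / 2 := htaylor
      _ = H * n * δ / 2 * δ := by rw [mul_pow, Real.sq_sqrt n.cast_nonneg]; ring
  exact ⟨hfull, hsplit ▸ hfull⟩
end

section
/- Let f : ℝⁿ → ℝ be twice continuously differentiable, let x ∈ ℝⁿ, δ > 0, let a₁, …, aₘ ∈ ℝⁿ, and suppose the operator norm of the Hessian of f is bounded by H on the closed ball of radius δ·(Σⱼ‖aⱼ‖₂) around x. Then for every sign vector Δ ∈ {−1,1}ᵐ and every index i ∈ {1,…,m}, |(f(x + δ·ΣⱼΔⱼaⱼ) − f(x))/(δΔᵢ) − ⟨∇f(x), aᵢ⟩ − Σ_{j≠i} ΔⱼΔᵢ·⟨∇f(x), aⱼ⟩| ≤ (H·δ/2)·(Σⱼ‖aⱼ‖₂)².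 -/
/-!
Since `Δᵢ² = 1`, the simultaneous perturbation quotient minus the cross terms equals
`(f(x + v) - f x - Df(x) v) / (δΔᵢ)` with `v = δ ∑ⱼ Δⱼ aⱼ`, and `‖v‖ ≤ δ ∑ⱼ ‖aⱼ‖`.
The numerator is a first-order Taylor remainder; the Hessian bound makes `Df` Lipschitz with
constant `H` on the ball, so comparing `t ↦ f(x + t v) - f x - t Df(x) v` with
`t ↦ H ‖v‖² t² / 2` bounds it by `H ‖v‖² / 2`.
-/

open scoped RealInnerProductSpace

section
variable {E F : Type*} [NormedAddCommGroup E] [NormedSpace ℝ E] [NormedAddCommGroup F]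
  [NormedSpace ℝ F]

theorem norm_image_add_sub_sub_fderiv_le_of_norm_fderiv_sub_le {f : E → F}
    (hf : Differentiable ℝ f) {x v : E} {H : ℝ}
    (hH : ∀ t ∈ Set.Ico (0 : ℝ) 1, ‖fderiv ℝ f (x + t • v) - fderiv ℝ f x‖ ≤ H * (t * ‖v‖)) :
    ‖f (x + v) - f x - fderiv ℝ f x v‖ ≤ H / 2 * ‖v‖ ^ 2 := by
  have hline : ∀ t : ℝ, HasDerivAt (fun t : ℝ => x + t • v) v t := fun t => by
    simpa using ((hasDerivAt_id t).smul_const v).const_add x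
  have hφ : ∀ t : ℝ, HasDerivAt (fun t : ℝ => f (x + t • v) - f x - t • fderiv ℝ f x v)
      (fderiv ℝ f (x + t • v) v - fderiv ℝ f x v) t := fun t =>
    ((((hf _).hasFDerivAt.comp_hasDerivAt t (hline t)).sub_const (f x)).sub
      ((hasDerivAt_id t).smul_const (fderiv ℝ f x v))).congr_deriv (by rw [one_smul])
  have hB : ∀ t : ℝ, HasDerivAt (fun t : ℝ => H / 2 * ‖v‖ ^ 2 * t ^ 2) (H * ‖v‖ ^ 2 * t) t :=
    fun t => ((hasDerivAt_pow 2 t).const_mul (H / 2 * ‖v‖ ^ 2)).congr_deriv (by ring)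
  have := image_norm_le_of_norm_deriv_right_le_deriv_boundary
    (fun t _ => (hφ t).continuousAt.continuousWithinAt) (fun t _ => (hφ t).hasDerivWithinAt)
    (by simp) hB (fun t ht => ?_) (Set.right_mem_Icc.2 zero_le_one)
  · simpa using this
  · calc ‖fderiv ℝ f (x + t • v) v - fderiv ℝ f x v‖
        = ‖(fderiv ℝ f (x + t • v) - fderiv ℝ f x) v‖ := rfl
      _ ≤ ‖fderiv ℝ f (x + t • v) - fderiv ℝ f x‖ * ‖v‖ := ContinuousLinearMap.le_opNorm _ _
      _ ≤ H * (t * ‖v‖) * ‖v‖ := by gcongr; exact hH t ht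
      _ = H * ‖v‖ ^ 2 * t := by ring

theorem norm_image_add_sub_sub_fderiv_le_of_norm_fderiv_fderiv_le {f : E → F}
    (hf : ContDiff ℝ 2 f) {x v : E} {r H : ℝ} (hvr : ‖v‖ ≤ r)
    (hH : ∀ y ∈ Metric.closedBall x r, ‖fderiv ℝ (fderiv ℝ f) y‖ ≤ H) :
    ‖f (x + v) - f x - fderiv ℝ f x v‖ ≤ H / 2 * ‖v‖ ^ 2 := by
  refine norm_image_add_sub_sub_fderiv_le_of_norm_fderiv_sub_le (hf.differentiable two_ne_zero)
    fun t ht => ?_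
  have hxt : ‖(x + t • v) - x‖ = t * ‖v‖ := by simp [norm_smul, abs_of_nonneg ht.1]
  have hmem : x + t • v ∈ Metric.closedBall x r := by
    rw [Metric.mem_closedBall, dist_eq_norm, hxt]
    nlinarith [norm_nonneg v, ht.1, ht.2]
  rw [← hxt]
  exact (convex_closedBall x r).norm_image_sub_le_of_norm_fderiv_le
    (fun y _ => (hf.fderiv_right le_rfl).differentiable one_ne_zero y) hH
    (Metric.mem_closedBall_self ((norm_nonneg v).trans hvr)) hmem
end

theorem Finset.sum_mul_eq_mul_add_sum_erase_of_mul_self_eq_one {ι R : Type*} [CommRing R]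
    [DecidableEq ι] {s : Finset ι} {i : ι} (hi : i ∈ s) (Δ c : ι → R) (hΔi : Δ i * Δ i = 1) :
    ∑ j ∈ s, Δ j * c j = Δ i * (c i + ∑ j ∈ s.erase i, Δ j * Δ i * c j) := by
  rw [← Finset.add_sum_erase s _ hi, mul_add, Finset.mul_sum]
  congr 1
  refine Finset.sum_congr rfl fun j _ => ?_
  linear_combination (-(Δ j * c j)) * hΔi

theorem norm_sum_smul_le_of_abs_le_one {ι E : Type*} [SeminormedAddCommGroup E]
    [NormedSpace ℝ E] (s : Finset ι) (Δ : ι → ℝ) (hΔ : ∀ j ∈ s, |Δ j| ≤ 1) (a : ι → E) :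
    ‖∑ j ∈ s, Δ j • a j‖ ≤ ∑ j ∈ s, ‖a j‖ :=
  (norm_sum_le _ _).trans <| Finset.sum_le_sum fun j hj => by
    rw [norm_smul, Real.norm_eq_abs]
    exact mul_le_of_le_one_left (norm_nonneg _) (hΔ j hj)

/-- Deterministic error bound for the simultaneous perturbation
measurement of the linear functionals `⟨∇f(x), aᵢ⟩`: if the Hessian of `f` has
operator norm at most `H` on the closed ball of radius `δ·∑ⱼ‖aⱼ‖₂` around `x`,
then for every sign vector `Δ ∈ {-1,1}ᵐ` and index `i`,
`|(f(x + δ∑ⱼΔⱼaⱼ) - f(x))/(δΔᵢ) - ⟨∇f(x), aᵢ⟩ - ∑_{j≠i} ΔⱼΔᵢ⟨∇f(x), aⱼ⟩|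
  ≤ (Hδ/2)·(∑ⱼ‖aⱼ‖₂)²`. -/
theorem stmt_3 (n m : ℕ) (f : EuclideanSpace ℝ (Fin n) → ℝ) (hf : ContDiff ℝ 2 f)
    (x : EuclideanSpace ℝ (Fin n)) (δ H : ℝ) (hδ : 0 < δ)
    (a : Fin m → EuclideanSpace ℝ (Fin n))
    (hH : ∀ y ∈ Metric.closedBall x (δ * ∑ j, ‖a j‖),
      ‖fderiv ℝ (fderiv ℝ f) y‖ ≤ H)
    (Δ : Fin m → ℝ) (hΔ : ∀ j, Δ j = 1 ∨ Δ j = -1) (i : Fin m) :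
    abs ((f (x + δ • ∑ j, Δ j • a j) - f x) / (δ * Δ i) -
        ⟪gradient f x, a i⟫ -
        ∑ j ∈ Finset.univ.erase i, Δ j * Δ i * ⟪gradient f x, a j⟫) ≤
      H * δ / 2 * (∑ j, ‖a j‖) ^ 2 := by
  have hΔabs : ∀ j, |Δ j| = 1 := fun j => by rcases hΔ j with h | h <;> simp [h]
  set v := δ • ∑ j, Δ j • a j
  have hv : ‖v‖ ≤ δ * ∑ j, ‖a j‖ := by
    rw [norm_smul, Real.norm_eq_abs, abs_of_pos hδ]
    gcongr
    exact norm_sum_smul_le_of_abs_le_one _ Δ (fun j _ => (hΔabs j).le) a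
  have hH0 : 0 ≤ H := (norm_nonneg (fderiv ℝ (fderiv ℝ f) x)).trans 
    (hH x (Metric.mem_closedBall_self ((norm_nonneg v).trans hv)))
  have hfv : fderiv ℝ f x v = δ * Δ i * (⟪gradient f x, a i⟫ +
      ∑ j ∈ Finset.univ.erase i, Δ j * Δ i * ⟪gradient f x, a j⟫) := by
    have hΔi : Δ i * Δ i = 1 := by rw [← abs_mul_abs_self, hΔabs, one_mul]
    rw [← toDual_gradient, InnerProductSpace.toDual_apply_apply, inner_smul_right, inner_sum]
    simp only [real_inner_smul_right]
    rw [Finset.sum_mul_eq_mul_add_sum_erase_of_mul_self_eq_one (Finset.mem_univ i) _ _ hΔi,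
      mul_assoc]
  have hδΔ : δ * Δ i ≠ 0 := mul_ne_zero hδ.ne' (by simp [← abs_ne_zero, hΔabs])
  rw [sub_sub, ← mul_div_cancel_left₀ (_ + _) hδΔ, ← hfv, ← sub_div, abs_div, abs_mul,
    abs_of_pos hδ, hΔabs, mul_one, div_le_iff₀ hδ, ← Real.norm_eq_abs]
  calc ‖f (x + v) - f x - fderiv ℝ f x v‖ ≤ H / 2 * ‖v‖ ^ 2 :=
        norm_image_add_sub_sub_fderiv_le_of_norm_fderiv_fderiv_le hf hv hH
    _ ≤ H / 2 * (δ * ∑ j, ‖a j‖) ^ 2 := by gcongr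
    _ = H * δ / 2 * (∑ j, ‖a j‖) ^ 2 * δ := by ring
end

section
/- Let f : ℝⁿ → ℝ be continuously differentiable, x ∈ ℝⁿ, δ > 0, and let a₁,…,aₘ ∈ ℝⁿ (m ≥ 2) with |⟨∇f(x), aⱼ⟩| ≤ C for all j. Let Δ¹,…,Δᵏ be independent random vectors, each uniform on {−1,1}ᵐ, and for each l and i set yᵢˡ = (f(x + δΣⱼΔⱼˡaⱼ) − f(x))/(δΔᵢˡ). Suppose there is K ≥ 0 such that for every sign vector Δ ∈ {−1,1}ᵐ and every i, |(f(x + δΣⱼΔⱼaⱼ) − f(x))/(δΔᵢ) − ⟨∇f(x), aᵢ⟩ − Σ_{j≠i}ΔⱼΔᵢ⟨∇f(x), aⱼ⟩| ≤ Kδ. Let η ∈ ℝᵐ be the error vector with coordinates ηᵢ = (1/k)Σ_{l=1}^{k} yᵢˡ − ⟨∇f(x), aᵢ⟩. Then for every t > 2mKδ, P(‖η‖₂ ≥ t) ≤ 2m·exp(−k·t²/(8m²(m−1)C²)). -/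
/-!
Write the `i`-th averaged measurement as `cᵢ + (1/k) ∑ₗ Zᵢ(Δˡ) + rᵢ`, where
`Zᵢ(Δ) = ∑_{j ≠ i} Δⱼ Δᵢ cⱼ` is the cross term and the bias satisfies `|rᵢ| ≤ Kδ`.
Since `Δⱼ Δᵢ` has mean zero for `j ≠ i`, each `Zᵢ` is centred, and `|Zᵢ| ≤ (m - 1) C`,
so Hoeffding's inequality controls `(1/k) ∑ₗ Zᵢ(Δˡ)`. If `‖η‖₂ ≥ t`, some coordinate has
`|ηᵢ| ≥ t / √m`; as `Kδ < t / (2m) ≤ t / (2√m)`, the averaged cross term then exceeds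
`t / (2√m)`, and a union bound over `i` gives `2m · exp (-k t² / (8 m (m - 1)² C²))`,
which is at most the claimed bound.
-/

open scoped RealInnerProductSpace

open MeasureTheory ProbabilityTheory Real Finset

section Uniform
variable {Ω : Type*} [Fintype Ω] [MeasurableSpace Ω] [MeasurableSingletonClass Ω]

lemma uniformOn_univ_real_apply (s : Set Ω) :
    (uniformOn (Set.univ : Set Ω)).real s = s.ncard / Fintype.card Ω := by
  rw [measureReal_def, uniformOn_univ, Measure.count_apply_finite _ s.toFinite,
    ENNReal.toReal_div, ← Set.ncard_eq_toFinset_card]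
  simp

lemma integral_uniformOn_univ (W : Ω → ℝ) :
    ∫ ω, W ω ∂uniformOn Set.univ = (∑ ω, W ω) / Fintype.card Ω := by
  rw [integral_fintype .of_finite, Finset.sum_div]
  refine Finset.sum_congr rfl fun ω _ => ?_
  rw [uniformOn_univ_real_apply, Set.ncard_singleton, smul_eq_mul]
  ring

lemma hasSubgaussianMGF_uniformOn_univ [Nonempty Ω] {W : Ω → ℝ} {B : ℝ}
    (hW : ∀ ω, |W ω| ≤ B) (hmean : ∑ ω, W ω = 0) :
    HasSubgaussianMGF W (‖B‖₊ ^ 2) (uniformOn Set.univ) := by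
  have := hasSubgaussianMGF_of_mem_Icc_of_integral_eq_zero (μ := uniformOn Set.univ)
    (a := -B) (b := B) Measurable.of_discrete.aemeasurable (ae_of_all _ fun ω => abs_le.mp (hW ω))
    (by rw [integral_uniformOn_univ, hmean, zero_div])
  convert this using 2
  rw [sub_neg_eq_add, ← two_mul, nnnorm_mul]
  simp

lemma uniformOn_univ_pi {ι : Type*} [Fintype ι] :
    (uniformOn Set.univ : Measure (ι → Ω)) = Measure.pi fun _ => uniformOn Set.univ := by
  rw [← uniformOn_pi, Set.pi_univ]

lemma uniformOn_univ_real_sum_ge_le {ι : Type*} [Fintype ι] [Nonempty Ω] {W : Ω → ℝ} {B : ℝ}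
    (hW : ∀ ω, |W ω| ≤ B) (hmean : ∑ ω, W ω = 0) {ε : ℝ} (hε : 0 ≤ ε) :
    (uniformOn Set.univ : Measure (ι → Ω)).real {σ | ε ≤ ∑ l, W (σ l)} ≤
      exp (-ε ^ 2 / (2 * Fintype.card ι * B ^ 2)) := by
  rw [uniformOn_univ_pi]
  have h := HasSubgaussianMGF.measure_sum_ge_le_of_iIndepFun (s := Finset.univ)
    (iIndepFun_pi (μ := fun _ : ι => uniformOn (Set.univ : Set Ω)) (X := fun _ => W)
      fun _ => Measurable.of_discrete.aemeasurable)
    (fun l _ => .of_map (measurable_pi_apply l).aemeasurable <| by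
      rw [(measurePreserving_eval _ l).map_eq]
      exact hasSubgaussianMGF_uniformOn_univ hW hmean) hε
  refine h.trans_eq ?_
  simp [mul_assoc]

lemma uniformOn_univ_real_abs_sum_ge_le {ι : Type*} [Fintype ι] [Nonempty Ω] {W : Ω → ℝ} {B : ℝ}
    (hW : ∀ ω, |W ω| ≤ B) (hmean : ∑ ω, W ω = 0) {ε : ℝ} (hε : 0 ≤ ε) :
    (uniformOn Set.univ : Measure (ι → Ω)).real {σ | ε ≤ |∑ l, W (σ l)|} ≤
      2 * exp (-ε ^ 2 / (2 * Fintype.card ι * B ^ 2)) := by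
  have hsplit : {σ : ι → Ω | ε ≤ |∑ l, W (σ l)|} ⊆
      {σ | ε ≤ ∑ l, W (σ l)} ∪ {σ | ε ≤ ∑ l, -W (σ l)} := by
    intro σ hσ
    simpa [Finset.sum_neg_distrib, le_abs] using hσ
  calc _ ≤ _ := measureReal_mono hsplit
    _ ≤ _ := measureReal_union_le _ _
    _ ≤ _ := by
      rw [two_mul]
      gcongr
      · exact uniformOn_univ_real_sum_ge_le hW hmean hε
      · exact uniformOn_univ_real_sum_ge_le (W := fun ω => -W ω) (by simpa using hW)
          (by simp [hmean]) hε

end Uniform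

noncomputable def boolSign (b : Bool) : ℝ := if b then 1 else -1

lemma boolSign_eq_one_or_neg_one (b : Bool) : boolSign b = 1 ∨ boolSign b = -1 := by
  cases b <;> simp [boolSign]

lemma abs_boolSign (b : Bool) : |boolSign b| = 1 := by cases b <;> simp [boolSign]

section CrossTerm
variable {ι : Type*} [Fintype ι] [DecidableEq ι]

lemma sum_boolSign_mul_boolSign {i j : ι} (hji : j ≠ i) :
    ∑ τ : ι → Bool, boolSign (τ j) * boolSign (τ i) = 0 := by
  -- splitting off the coordinate `j` factors out `∑ b, boolSign b = 0`
  rw [← (Equiv.funSplitAt j Bool).symm.sum_comp, Fintype.sum_prod_type]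
  simp [Equiv.funSplitAt_symm_apply, hji.symm, ← Finset.mul_sum]
  simp [boolSign]

noncomputable def crossTerm (c : ι → ℝ) (i : ι) (τ : ι → Bool) : ℝ :=
  ∑ j ∈ univ.erase i, boolSign (τ j) * boolSign (τ i) * c j

lemma sum_crossTerm (c : ι → ℝ) (i : ι) : ∑ τ, crossTerm c i τ = 0 := by
  unfold crossTerm
  rw [Finset.sum_comm]
  refine Finset.sum_eq_zero fun j hj => ?_
  rw [← Finset.sum_mul, sum_boolSign_mul_boolSign (Finset.ne_of_mem_erase hj), zero_mul]

lemma abs_crossTerm_le {c : ι → ℝ} {C : ℝ} (hc : ∀ j, |c j| ≤ C) (i : ι) (τ : ι → Bool) :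
    |crossTerm c i τ| ≤ (Fintype.card ι - 1) * C := by
  calc |crossTerm c i τ| ≤ ∑ j ∈ univ.erase i, |boolSign (τ j) * boolSign (τ i) * c j| :=
        Finset.abs_sum_le_sum_abs _ _
    _ ≤ ∑ _j ∈ univ.erase i, C := by
        gcongr with j
        simpa [abs_mul, abs_boolSign] using hc j
    _ = (Fintype.card ι - 1) * C := by
        rw [sum_const, card_erase_of_mem (mem_univ i), card_univ, nsmul_eq_mul,
          Nat.cast_pred (Fintype.card_pos_iff.mpr ⟨i⟩)]

end CrossTerm

lemma EuclideanSpace.exists_norm_le_sqrt_card_mul_abs {ι : Type*} [Fintype ι] [Nonempty ι]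
    (v : EuclideanSpace ℝ ι) : ∃ i, ‖v‖ ≤ √(Fintype.card ι) * |v i| := by
  obtain ⟨i, hi⟩ := Finite.exists_max fun j => |v j|
  refine ⟨i, ?_⟩
  rw [EuclideanSpace.norm_eq, ← sqrt_sq (abs_nonneg (v i)), ← sqrt_mul (Nat.cast_nonneg _)]
  refine sqrt_le_sqrt ?_
  calc ∑ j, ‖v j‖ ^ 2 ≤ ∑ _j : ι, |v i| ^ 2 := by
        gcongr with j
        exact hi j
    _ = _ := by simp

lemma abs_mean_le {k : ℕ} {g : Fin k → ℝ} {ρ : ℝ} (hk : 0 < k) (hg : ∀ l, |g l| ≤ ρ) :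
    |(1 / (k : ℝ)) * ∑ l, g l| ≤ ρ := by
  have hk' : (0 : ℝ) < k := by exact_mod_cast hk
  rw [abs_mul, abs_of_pos (by positivity), one_div_mul_eq_div, div_le_iff₀ hk']
  calc |∑ l, g l| ≤ ∑ l, |g l| := abs_sum_le_sum_abs _ _
    _ ≤ ∑ _l : Fin k, ρ := by gcongr with l; exact hg l
    _ = ρ * k := by simp [mul_comm]

lemma EuclideanSpace.exists_le_abs_of_le_norm {ι : Type*} [Fintype ι] [Nonempty ι]
    {u v : EuclideanSpace ℝ ι} {ρ t : ℝ} (huv : ∀ i, |u i - v i| ≤ ρ)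
    (hρt : 2 * √(Fintype.card ι) * ρ ≤ t) (ht : t ≤ ‖u‖) :
    ∃ i, t / (2 * √(Fintype.card ι)) ≤ |v i| := by
  obtain ⟨i, hi⟩ := exists_norm_le_sqrt_card_mul_abs u
  have hsqrt : 0 < √(Fintype.card ι : ℝ) := sqrt_pos.mpr (by exact_mod_cast Fintype.card_pos)
  have hdev : |u i| - |v i| ≤ ρ := (abs_sub_abs_le_abs_sub _ _).trans (huv i)
  refine ⟨i, ?_⟩
  rw [div_le_iff₀ (by positivity)]
  nlinarith [mul_le_mul_of_nonneg_left hdev hsqrt.le]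

theorem uniformOn_univ_real_norm_mean_sub_ge_le {α ι : Type*} [Fintype α] [MeasurableSpace α]
    [MeasurableSingletonClass α] [Nonempty α] [Fintype ι] [Nonempty ι] {k : ℕ}
    {y : α → ι → ℝ} {c : ι → ℝ} {Z : ι → α → ℝ} {B ρ t : ℝ}
    (hZ : ∀ i a, |Z i a| ≤ B) (hZmean : ∀ i, ∑ a, Z i a = 0)
    (hy : ∀ a i, |y a i - c i - Z i a| ≤ ρ) (hρt : 2 * √(Fintype.card ι) * ρ ≤ t) :
    (uniformOn Set.univ : Measure (Fin k → α)).real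
        {σ | t ≤ ‖WithLp.toLp 2 (fun i => (1 / (k : ℝ)) * ∑ l, y (σ l) i - c i)‖} ≤
      2 * Fintype.card ι * exp (-(k * t ^ 2) / (8 * Fintype.card ι * B ^ 2)) := by
  rcases Nat.eq_zero_or_pos k with rfl | hk
  · have : (1 : ℝ) ≤ Fintype.card ι := by exact_mod_cast Fintype.card_pos
    simpa using measureReal_le_one.trans (by linarith)
  set m : ℝ := (Fintype.card ι : ℝ)
  have hm : 0 < m := by positivity
  have hk' : (0 : ℝ) < k := by exact_mod_cast hk
  have hρ : 0 ≤ ρ := (abs_nonneg _).trans (hy (Classical.arbitrary α) (Classical.arbitrary ι))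
  have ht : 0 ≤ t := le_trans (by positivity) hρt
  set ε := k * (t / (2 * √m))
  have hsub : {σ : Fin k → α | t ≤ ‖WithLp.toLp 2 (fun i => (1 / (k : ℝ)) * ∑ l, y (σ l) i - c i)‖}
      ⊆ ⋃ i, {σ | ε ≤ |∑ l, Z i (σ l)|} := by
    intro σ hσ
    have hdev (i : ι) :
        |((1 / (k : ℝ)) * ∑ l, y (σ l) i - c i) - (1 / (k : ℝ)) * ∑ l, Z i (σ l)| ≤ ρ := by
      convert abs_mean_le hk fun l => hy (σ l) i using 2
      simp [Finset.sum_sub_distrib]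
      field_simp
    obtain ⟨i, hi⟩ := EuclideanSpace.exists_le_abs_of_le_norm
      (v := WithLp.toLp 2 fun i => (1 / (k : ℝ)) * ∑ l, Z i (σ l)) hdev hρt hσ
    rw [PiLp.toLp_apply, abs_mul, abs_of_pos (by positivity), one_div_mul_eq_div,
      le_div_iff₀' hk'] at hi
    exact Set.mem_iUnion.mpr ⟨i, hi⟩
  calc _ ≤ _ := measureReal_mono hsub
    _ ≤ _ := measureReal_iUnion_fintype_le _
    _ ≤ ∑ _i : ι, 2 * exp (-ε ^ 2 / (2 * k * B ^ 2)) := by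
        gcongr with i
        simpa using uniformOn_univ_real_abs_sum_ge_le (ι := Fin k) (hZ i) (hZmean i)
          (by positivity : 0 ≤ ε)
    _ = _ := by
        have hε2 : ε ^ 2 = k * (k * t ^ 2 / (4 * m)) := by
          rw [mul_pow, div_pow, mul_pow, sq_sqrt hm.le]
          ring
        have hε : ε ^ 2 / (2 * k * B ^ 2) = k * t ^ 2 / (8 * m * B ^ 2) := by
          rw [hε2, show 2 * k * B ^ 2 = k * (2 * B ^ 2) by ring, mul_div_mul_left _ _ hk'.ne',
            div_div]
          ring
        simp only [sum_const, card_univ, nsmul_eq_mul, neg_div, hε]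
        ring

theorem stmt_5_general (n m k : ℕ) (hm : 2 ≤ m)
    (f : EuclideanSpace ℝ (Fin n) → ℝ)
    (x : EuclideanSpace ℝ (Fin n)) (δ : ℝ) (hδ : 0 < δ)
    (a : Fin m → EuclideanSpace ℝ (Fin n)) (C : ℝ)
    (hC : ∀ j, |⟪gradient f x, a j⟫| ≤ C)
    (K : ℝ) (hK : 0 ≤ K)
    (hrem : ∀ Δ : Fin m → ℝ, (∀ j, Δ j = 1 ∨ Δ j = -1) → ∀ i : Fin m,
      abs ((f (x + δ • ∑ j, Δ j • a j) - f x) / (δ * Δ i) -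
          ⟪gradient f x, a i⟫ -
          ∑ j ∈ Finset.univ.erase i, Δ j * Δ i * ⟪gradient f x, a j⟫) ≤ K * δ)
    (t : ℝ) (ht : 2 * m * K * δ < t) :
    (({σ : Fin k → Fin m → Bool |
        t ≤ ‖(WithLp.equiv 2 (Fin m → ℝ)).symm (fun i =>
          (1 / (k : ℝ)) * (∑ l, (f (x + δ • ∑ j,
              (if σ l j then (1 : ℝ) else -1) • a j) - f x) /
            (δ * (if σ l i then (1 : ℝ) else -1))) -
          ⟪gradient f x, a i⟫)‖}.ncard : ℝ) / 2 ^ (k * m)) ≤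
      2 * m * Real.exp (-((k : ℝ) * t ^ 2) /
        (8 * (m : ℝ) ^ 2 * ((m : ℝ) - 1) * C ^ 2)) := by
  have : Nonempty (Fin m) := ⟨⟨0, by omega⟩⟩
  have hm1 : (1 : ℝ) < m := by exact_mod_cast hm
  have hρt : 2 * √(Fintype.card (Fin m) : ℝ) * (K * δ) ≤ t := by
    have : √(m : ℝ) ≤ m := sqrt_le_self_iff.mpr (Or.inr hm1.le)
    rw [Fintype.card_fin]
    nlinarith [mul_nonneg hK hδ.le]
  have key := uniformOn_univ_real_norm_mean_sub_ge_le (α := Fin m → Bool) (k := k)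
    (y := fun τ i => (f (x + δ • ∑ j, boolSign (τ j) • a j) - f x) / (δ * boolSign (τ i)))
    (abs_crossTerm_le hC) (sum_crossTerm _)
    (fun τ i => hrem _ (fun j => boolSign_eq_one_or_neg_one (τ j)) i) hρt
  have hexp : -(k * t ^ 2) / (8 * m * ((m - 1) * C) ^ 2) ≤
      -(k * t ^ 2) / (8 * m ^ 2 * (m - 1) * C ^ 2) := by
    rcases eq_or_ne C 0 with rfl | hC0
    · simp
    have : (0 : ℝ) < m - 1 := by linarith
    rw [neg_div, neg_div, neg_le_neg_iff]
    apply div_le_div_of_nonneg_left (by positivity) (by positivity)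
    nlinarith
  rw [uniformOn_univ_real_apply] at key
  simp only [Fintype.card_fin, Fintype.card_fun, Fintype.card_bool, Nat.cast_pow,
    Nat.cast_ofNat, ← pow_mul, mul_comm m k] at key
  exact key.trans (by gcongr)

/-- Tail bound on the error vector of averaged simultaneous
perturbation measurements: with `Δ¹, …, Δᵏ` independent uniform sign vectors on
`{-1,1}ᵐ` (encoded by `σ : Fin k → Fin m → Bool`, sign `if · then 1 else -1`, so
probabilities are cardinalities divided by `2^(k·m)`), with
`yᵢˡ = (f(x + δ∑ⱼΔⱼˡaⱼ) - f(x))/(δΔᵢˡ)`, per-measurement remainder bounded by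
`Kδ`, and `ηᵢ = (1/k)∑ₗ yᵢˡ - ⟨∇f(x), aᵢ⟩`, one has for `t > 2mKδ`:
`P(‖η‖₂ ≥ t) ≤ 2m·exp(-k·t²/(8m²(m-1)C²))`. -/
theorem stmt_5 (n m k : ℕ) (hm : 2 ≤ m)
    (f : EuclideanSpace ℝ (Fin n) → ℝ) (hf : ContDiff ℝ 1 f)
    (x : EuclideanSpace ℝ (Fin n)) (δ : ℝ) (hδ : 0 < δ)
    (a : Fin m → EuclideanSpace ℝ (Fin n)) (C : ℝ)
    (hC : ∀ j, |⟪gradient f x, a j⟫| ≤ C)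
    (K : ℝ) (hK : 0 ≤ K)
    (hrem : ∀ Δ : Fin m → ℝ, (∀ j, Δ j = 1 ∨ Δ j = -1) → ∀ i : Fin m,
      abs ((f (x + δ • ∑ j, Δ j • a j) - f x) / (δ * Δ i) -
          ⟪gradient f x, a i⟫ -
          ∑ j ∈ Finset.univ.erase i, Δ j * Δ i * ⟪gradient f x, a j⟫) ≤ K * δ)
    (t : ℝ) (ht : 2 * m * K * δ < t) :
    (({σ : Fin k → Fin m → Bool |
        t ≤ ‖(WithLp.equiv 2 (Fin m → ℝ)).symm (fun i =>
          (1 / (k : ℝ)) * (∑ l, (f (x + δ • ∑ j,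
              (if σ l j then (1 : ℝ) else -1) • a j) - f x) /
            (δ * (if σ l i then (1 : ℝ) else -1))) -
          ⟪gradient f x, a i⟫)‖}.ncard : ℝ) / 2 ^ (k * m)) ≤
      2 * m * Real.exp (-((k : ℝ) * t ^ 2) /
        (8 * (m : ℝ) ^ 2 * ((m : ℝ) - 1) * C ^ 2)) :=
  stmt_5_general n m k hm f x δ hδ a C hC K hK hrem t ht
end

section
/- Let f : ℝⁿ → ℝ be continuously differentiable, ε₀ ≥ 0, c > 0, and let x : ℝ → ℝⁿ be continuously differentiable with x′(t) = −∇f(x(t)) + η(t) where ‖η(t)‖₂ ≤ ε₀ for all t. If ‖∇f(x(t))‖₂ ≥ ε₀ + c for every t in an interval [a, b], then f(x(b)) ≤ f(x(a)) − c·(ε₀ + c)·(b − a). -/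
/-!
Along the flow, `d/dt f(x t) = ⟪∇f, -∇f + η⟫ ≤ -‖∇f‖ (‖∇f‖ - ε₀)` by Cauchy–Schwarz, and this is
at most `-c (ε₀ + c)` wherever `‖∇f‖ ≥ ε₀ + c`. The mean value inequality on `[a, b]` concludes.
-/

open scoped RealInnerProductSpace

theorem HasGradientAt.comp_hasDerivAt {E : Type*} [NormedAddCommGroup E] [InnerProductSpace ℝ E]
    [CompleteSpace E] {f : E → ℝ} {g v : E} {x : ℝ → E} {t : ℝ}
    (hf : HasGradientAt f g (x t)) (hx : HasDerivAt x v t) :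
    HasDerivAt (f ∘ x) ⟪g, v⟫ t := by
  simpa [InnerProductSpace.toDual_apply_apply] using hf.hasFDerivAt.comp_hasDerivAt t hx

theorem real_inner_neg_add_le {E : Type*} [NormedAddCommGroup E] [InnerProductSpace ℝ E]
    {g e : E} {ε c : ℝ} (hc : 0 ≤ c) (he : ‖e‖ ≤ ε) (hg : ε + c ≤ ‖g‖) :
    ⟪g, -g + e⟫ ≤ -(c * (ε + c)) := by
  have hge : ⟪g, e⟫ ≤ ‖g‖ * ε :=
    (real_inner_le_norm g e).trans (mul_le_mul_of_nonneg_left he (norm_nonneg g))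
  have hprod : (ε + c) * c ≤ ‖g‖ * (‖g‖ - ε) :=
    mul_le_mul hg (by linarith) hc (norm_nonneg g)
  calc ⟪g, -g + e⟫ = -‖g‖ ^ 2 + ⟪g, e⟫ := by
        rw [inner_add_right, inner_neg_right, real_inner_self_eq_norm_sq]
    _ ≤ -(‖g‖ * (‖g‖ - ε)) := by linarith
    _ ≤ -(c * (ε + c)) := by linarith

theorem stmt_15_general (n : ℕ) (f : EuclideanSpace ℝ (Fin n) → ℝ) (hf : ContDiff ℝ 1 f)
    (ε₀ c : ℝ) (hc : 0 < c)
    (x η : ℝ → EuclideanSpace ℝ (Fin n))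
    (hx : ∀ t, HasDerivAt x (-gradient f (x t) + η t) t)
    (hηb : ∀ t, ‖η t‖ ≤ ε₀)
    (a b : ℝ) (hab : a ≤ b)
    (hgrad : ∀ t ∈ Set.Icc a b, ε₀ + c ≤ ‖gradient f (x t)‖) :
    f (x b) ≤ f (x a) - c * (ε₀ + c) * (b - a) := by
  have hderiv (t : ℝ) : HasDerivAt (f ∘ x) ⟪gradient f (x t), -gradient f (x t) + η t⟫ t :=
    ((hf.differentiable one_ne_zero (x t)).hasGradientAt).comp_hasDerivAt (hx t)
  have hdecay : f (x b) - f (x a) ≤ -(c * (ε₀ + c)) * (b - a) :=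
    (convex_Icc a b).image_sub_le_mul_sub_of_deriv_le
      (fun t _ => (hderiv t).continuousAt.continuousWithinAt)
      (fun t _ => (hderiv t).differentiableAt.differentiableWithinAt)
      (fun t ht => (hderiv t).deriv ▸
        real_inner_neg_add_le hc.le (hηb t) (hgrad t (interior_subset ht)))
      a (Set.left_mem_Icc.2 hab) b (Set.right_mem_Icc.2 hab) hab
  linarith

/-- Along a continuously differentiable solution of the
perturbed gradient flow `x'(t) = -∇f(x(t)) + η(t)` with `‖η(t)‖₂ ≤ ε₀` for all
`t`: if `‖∇f(x(t))‖₂ ≥ ε₀ + c` on `[a, b]`, then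
`f(x(b)) ≤ f(x(a)) - c(ε₀ + c)(b - a)`. -/
theorem stmt_15 (n : ℕ) (f : EuclideanSpace ℝ (Fin n) → ℝ) (hf : ContDiff ℝ 1 f)
    (ε₀ c : ℝ) (hε₀ : 0 ≤ ε₀) (hc : 0 < c)
    (x η : ℝ → EuclideanSpace ℝ (Fin n)) (hη_cont : Continuous η)
    (hx : ∀ t, HasDerivAt x (-gradient f (x t) + η t) t)
    (hηb : ∀ t, ‖η t‖ ≤ ε₀)
    (a b : ℝ) (hab : a ≤ b)
    (hgrad : ∀ t ∈ Set.Icc a b, ε₀ + c ≤ ‖gradient f (x t)‖) :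
    f (x b) ≤ f (x a) - c * (ε₀ + c) * (b - a) :=
  stmt_15_general n f hf ε₀ c hc x η hx hηb a b hab hgrad
end
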